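/- Let t ∈ (0,1) with t ≠ 1 and μ₁ = μ₂ = 0. For every ρ ∈ (0,1), the function Q has derivative at ρ equal to (π√(1−ρ²))^{−1} · [ exp(−z_{t/2}²/(1+ρ)) − exp(−z_{t/2}²/(1−ρ)) ], and this derivative is strictly positive. -/

import Mathlib

open MeasureTheory Real Set Filter Asymptotics

/-- Standard normal density. -/
noncomputable def stdPDF (x : ℝ) : ℝ := (Real.sqrt (2 * Real.pi))⁻¹ * Real.exp (-x ^ 2 / 2)

/-- Standard normal CDF. -/
noncomputable def stdCDF (x : ℝ) : ℝ := ∫ u in Set.Iio x, stdPDF u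

/-- Bivariate normal density with means `μ₁ μ₂`, unit variances, correlation `ρ`. -/
noncomputable def bvnPDF (μ₁ μ₂ ρ x y : ℝ) : ℝ :=
  (2 * Real.pi * Real.sqrt (1 - ρ ^ 2))⁻¹ *
    Real.exp (-((x - μ₁) ^ 2 - 2 * ρ * (x - μ₁) * (y - μ₂) + (y - μ₂) ^ 2) / (2 * (1 - ρ ^ 2)))

/-- `Q(ρ)`: probability both coordinates exceed `|z|` in absolute value. -/
noncomputable def quadProb (μ₁ μ₂ z ρ : ℝ) : ℝ :=
  ∫ p in {p : ℝ × ℝ | |z| < |p.1| ∧ |z| < |p.2|}, bvnPDF μ₁ μ₂ ρ p.1 p.2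

/-- `Cov(ρ)`: covariance of the two-sided rejection indicators. -/
noncomputable def covInd (μ₁ μ₂ z ρ : ℝ) : ℝ :=
  quadProb μ₁ μ₂ z ρ -
    (stdCDF (z + μ₁) + stdCDF (z - μ₁)) * (stdCDF (z + μ₂) + stdCDF (z - μ₂))

/-! Write `f_r` for the centred bivariate normal density and `c = |z|`. Inclusion–exclusion over the
two strips `|x| ≤ c`, `|y| ≤ c` gives `Q(r) = 1 - 2 P(|X| ≤ c) + ∫_{[-c,c]²} f_r`, where only the
last term depends on `r`. Differentiating under the integral and using Plackett's identity
`∂_r f_r = ∂_x ∂_y f_r`, the derivative is an alternating sum of `f_ρ` over the corners of the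
square, `2 (f_ρ(c,c) - f_ρ(c,-c))`, which is the stated expression. It is positive because
`z ≠ 0`: `stdCDF 0 = 1/2` while `t ≠ 1`. -/

open ProbabilityTheory Topology

theorem setIntegral_compl_inter_compl {α E : Type*} [MeasurableSpace α] {μ : Measure α}
    [NormedAddCommGroup E] [NormedSpace ℝ E] {f : α → E} (hf : Integrable f μ) {A B : Set α}
    (hA : MeasurableSet A) (hB : MeasurableSet B) :
    ∫ a in Aᶜ ∩ Bᶜ, f a ∂μ = ∫ a, f a ∂μ - ∫ a in A, f a ∂μ - ∫ a in B, f a ∂μ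
      + ∫ a in A ∩ B, f a ∂μ := by
  have split (s : Set α) {t : Set α} (ht : MeasurableSet t) :
      ∫ a in s, f a ∂μ = ∫ a in s ∩ t, f a ∂μ + ∫ a in s ∩ tᶜ, f a ∂μ := by
    rw [← integral_add_compl ht hf.restrict, Measure.restrict_restrict ht,
      Measure.restrict_restrict ht.compl, inter_comm t, inter_comm tᶜ]
  have hB' := split B hA
  rw [inter_comm B, inter_comm B] at hB'
  rw [← integral_add_compl hA hf, split Aᶜ hB, hB']
  abel

theorem integral_Icc_prod_Icc_eq_of_hasDerivAt {F H G : ℝ → ℝ → ℝ} {a₁ b₁ a₂ b₂ : ℝ}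
    (h₁ : a₁ ≤ b₁) (h₂ : a₂ ≤ b₂) (hF : ∀ x y, HasDerivAt (F · y) (H x y) x)
    (hH : ∀ x y, HasDerivAt (H x ·) (G x y) y) (hHc : ∀ y, Continuous (H · y))
    (hG : Continuous fun p : ℝ × ℝ => G p.1 p.2) :
    ∫ p in Icc a₁ b₁ ×ˢ Icc a₂ b₂, G p.1 p.2 = F b₁ b₂ - F a₁ b₂ - (F b₁ a₂ - F a₁ a₂) := by
  have hGi : IntegrableOn (fun p : ℝ × ℝ => G p.1 p.2) (Icc a₁ b₁ ×ˢ Icc a₂ b₂) :=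
    hG.continuousOn.integrableOn_compact (isCompact_Icc.prod isCompact_Icc)
  have inner (x : ℝ) : ∫ y in Icc a₂ b₂, G x y = H x b₂ - H x a₂ := by
    rw [integral_Icc_eq_integral_Ioc, ← intervalIntegral.integral_of_le h₂]
    exact intervalIntegral.integral_eq_sub_of_hasDerivAt (fun y _ => hH x y)
      ((hG.comp (Continuous.prodMk_right x)).intervalIntegrable _ _)
  rw [Measure.volume_eq_prod] at hGi ⊢
  rw [setIntegral_prod _ hGi]
  simp_rw [inner]
  rw [integral_Icc_eq_integral_Ioc, ← intervalIntegral.integral_of_le h₁,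
    intervalIntegral.integral_sub ((hHc _).intervalIntegrable _ _) ((hHc _).intervalIntegrable _ _),
    intervalIntegral.integral_eq_sub_of_hasDerivAt (fun x _ => hF x b₂)
      ((hHc _).intervalIntegrable _ _),
    intervalIntegral.integral_eq_sub_of_hasDerivAt (fun x _ => hF x a₂)
      ((hHc _).intervalIntegrable _ _)]

theorem hasDerivAt_setIntegral_of_continuousOn {α E : Type*} [TopologicalSpace α] [T2Space α]
    [MeasurableSpace α] [OpensMeasurableSpace α] {μ : Measure α} [IsFiniteMeasureOnCompacts μ]
    [NormedAddCommGroup E] [NormedSpace ℝ E] {K : Set α} (hK : IsCompact K) {s : Set ℝ}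
    (hs : IsCompact s) {x₀ : ℝ} (hx₀ : s ∈ 𝓝 x₀) {F F' : ℝ → α → E}
    (hF : ∀ x ∈ s, ContinuousOn (F x) K)
    (hF' : ContinuousOn (fun q : ℝ × α => F' q.1 q.2) (s ×ˢ K))
    (hdiff : ∀ x ∈ s, ∀ a ∈ K, HasDerivAt (F · a) (F' x a) x) :
    HasDerivAt (fun x => ∫ a in K, F x a ∂μ) (∫ a in K, F' x₀ a ∂μ) x₀ := by
  obtain ⟨C, hC⟩ := (hs.prod hK).exists_bound_of_continuousOn hF'
  have hx₀s : x₀ ∈ s := mem_of_mem_nhds hx₀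
  have hKm : MeasurableSet K := hK.measurableSet
  have hF'₀ : ContinuousOn (F' x₀) K :=
    hF'.comp (Continuous.prodMk_right x₀).continuousOn fun a ha => ⟨hx₀s, ha⟩
  refine (hasDerivAt_integral_of_dominated_loc_of_deriv_le hx₀
    (eventually_of_mem hx₀ fun x hx => (hF x hx).aestronglyMeasurable_of_isCompact hK hKm)
    ((hF x₀ hx₀s).integrableOn_compact hK) (hF'₀.aestronglyMeasurable_of_isCompact hK hKm)
    (bound := fun _ => C) ?_ (integrableOn_const hK.measure_ne_top) ?_).2
  · exact (ae_restrict_mem hKm).mono fun a ha x hx => hC (x, a) ⟨hx, ha⟩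
  · exact (ae_restrict_mem hKm).mono fun a ha x hx => hdiff x hx a ha

lemma stdPDF_eq_gaussianPDFReal : stdPDF = gaussianPDFReal 0 1 := by
  ext x; simp [stdPDF, gaussianPDFReal]

lemma stdCDF_zero : stdCDF 0 = 1 / 2 := by
  have hint : Integrable stdPDF := stdPDF_eq_gaussianPDFReal ▸ integrable_gaussianPDFReal 0 1
  have htot : ∫ x, stdPDF x = 1 := by
    rw [stdPDF_eq_gaussianPDFReal]; exact integral_gaussianPDFReal_eq_one 0 one_ne_zero
  have heven (x : ℝ) : stdPDF (-x) = stdPDF x := by simp only [stdPDF, neg_sq]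
  have hsym : ∫ x in Ioi 0, stdPDF x = ∫ x in Iio 0, stdPDF x := by
    rw [← integral_Iic_eq_integral_Iio, ← neg_zero, ← integral_comp_neg_Ioi, neg_zero]
    simp only [heven]
  have hsplit := integral_add_compl measurableSet_Iio (s := Iio (0 : ℝ)) hint
  rw [compl_Iio, integral_Ici_eq_integral_Ioi, hsym, htot] at hsplit
  rw [stdCDF]
  linarith

section Bivariate

variable {r : ℝ}

lemma bvnPDF_zero_zero (r x y : ℝ) : bvnPDF 0 0 r x y =
    (2 * π * √(1 - r ^ 2))⁻¹ * exp (-(x ^ 2 - 2 * r * x * y + y ^ 2) / (2 * (1 - r ^ 2))) := by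
  simp only [bvnPDF, sub_zero]

lemma bvnPDF_comm (r x y : ℝ) : bvnPDF 0 0 r x y = bvnPDF 0 0 r y x := by
  simp only [bvnPDF_zero_zero]; ring_nf

lemma bvnPDF_neg_neg (r x y : ℝ) : bvnPDF 0 0 r (-x) (-y) = bvnPDF 0 0 r x y := by
  simp only [bvnPDF_zero_zero]; ring_nf

lemma continuous_bvnPDF (r : ℝ) : Continuous fun p : ℝ × ℝ => bvnPDF 0 0 r p.1 p.2 := by
  unfold bvnPDF; fun_prop

lemma bvnPDF_eq_gaussianPDFReal_mul (hr : r ^ 2 < 1) (x y : ℝ) :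
    bvnPDF 0 0 r x y =
      gaussianPDFReal 0 1 x * gaussianPDFReal (r * x) (1 - r ^ 2).toNNReal y := by
  have hv : 0 < 1 - r ^ 2 := by linarith
  have hexp : exp (-(x - 0) ^ 2 / (2 * 1)) * exp (-(y - r * x) ^ 2 / (2 * (1 - r ^ 2))) =
      exp (-(x ^ 2 - 2 * r * x * y + y ^ 2) / (2 * (1 - r ^ 2))) := by
    rw [← exp_add]; congr 1; field_simp; ring
  have hnorm : (√(2 * π * 1))⁻¹ * (√(2 * π * (1 - r ^ 2)))⁻¹ = (2 * π * √(1 - r ^ 2))⁻¹ := by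
    rw [← mul_inv, ← sqrt_mul (by positivity),
      show 2 * π * 1 * (2 * π * (1 - r ^ 2)) = (2 * π) ^ 2 * (1 - r ^ 2) by ring,
      sqrt_mul (by positivity), sqrt_sq (by positivity)]
  rw [bvnPDF_zero_zero, gaussianPDFReal, gaussianPDFReal, Real.coe_toNNReal _ hv.le,
    NNReal.coe_one, ← hnorm, ← hexp]
  ring

lemma integral_bvnPDF_eq_stdPDF (hr : r ^ 2 < 1) (x : ℝ) :
    ∫ y, bvnPDF 0 0 r x y = stdPDF x := by
  have hv : (1 - r ^ 2).toNNReal ≠ 0 := by rw [ne_eq, Real.toNNReal_eq_zero, not_le]; linarith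
  simp_rw [bvnPDF_eq_gaussianPDFReal_mul hr x, integral_const_mul,
    integral_gaussianPDFReal_eq_one _ hv, mul_one, stdPDF_eq_gaussianPDFReal]

lemma integrable_bvnPDF (hr : r ^ 2 < 1) :
    Integrable (fun p : ℝ × ℝ => bvnPDF 0 0 r p.1 p.2) := by
  rw [Measure.volume_eq_prod, integrable_prod_iff (continuous_bvnPDF r).aestronglyMeasurable]
  refine ⟨.of_forall fun x => ?_, ?_⟩
  · simp_rw [bvnPDF_eq_gaussianPDFReal_mul hr x]
    exact (integrable_gaussianPDFReal _ _).const_mul _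
  · have hnn (x y : ℝ) : 0 ≤ bvnPDF 0 0 r x y := by rw [bvnPDF]; positivity
    simp_rw [Real.norm_of_nonneg (hnn _ _), integral_bvnPDF_eq_stdPDF hr,
      stdPDF_eq_gaussianPDFReal]
    exact integrable_gaussianPDFReal _ _

noncomputable def bvnPDFDerivX (r x y : ℝ) : ℝ := bvnPDF 0 0 r x y * (r * y - x) / (1 - r ^ 2)

noncomputable def bvnPDFDerivRho (r x y : ℝ) : ℝ :=
  bvnPDF 0 0 r x y * (r * (1 - r ^ 2) + x * y * (1 + r ^ 2) - r * (x ^ 2 + y ^ 2)) / (1 - r ^ 2) ^ 2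

lemma hasDerivAt_bvnPDF_x (r x y : ℝ) :
    HasDerivAt (fun x => bvnPDF 0 0 r x y) (bvnPDFDerivX r x y) x := by
  have hq := (((hasDerivAt_id' x).fun_pow 2).fun_sub
    (((hasDerivAt_id' x).const_mul (2 * r)).mul_const y)).add_const (y ^ 2)
  have h := (hq.fun_neg.div_const (2 * (1 - r ^ 2))).exp.const_mul (2 * π * √(1 - r ^ 2))⁻¹
  simp only [bvnPDFDerivX, bvnPDF_zero_zero]
  refine h.congr_deriv ?_
  field_simp; ring

/-- Plackett's identity: `∂_y ∂_x f_r = ∂_r f_r`. -/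
lemma hasDerivAt_bvnPDFDerivX_y (hr : r ^ 2 < 1) (x y : ℝ) :
    HasDerivAt (fun y => bvnPDFDerivX r x y) (bvnPDFDerivRho r x y) y := by
  have hv : 1 - r ^ 2 ≠ 0 := by linarith
  have hq := (((hasDerivAt_id' y).const_mul (2 * r * x)).const_sub (x ^ 2)).fun_add
    ((hasDerivAt_id' y).fun_pow 2)
  have hf := (hq.fun_neg.div_const (2 * (1 - r ^ 2))).exp.const_mul (2 * π * √(1 - r ^ 2))⁻¹
  have h := (hf.fun_mul (((hasDerivAt_id' y).const_mul r).sub_const x)).div_const (1 - r ^ 2)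
  simp only [bvnPDFDerivX, bvnPDFDerivRho, bvnPDF_zero_zero]
  refine (h.congr_of_eventuallyEq (.of_forall fun s => ?_)).congr_deriv ?_
  · ring_nf
  · field_simp; ring

lemma hasDerivAt_bvnPDF_rho (hr : r ^ 2 < 1) (x y : ℝ) :
    HasDerivAt (fun r => bvnPDF 0 0 r x y) (bvnPDFDerivRho r x y) r := by
  have hv : 0 < 1 - r ^ 2 := by linarith
  have hsq : HasDerivAt (fun r : ℝ => 1 - r ^ 2) (-(2 * r)) r := by
    simpa using (hasDerivAt_pow 2 r).const_sub 1
  have hnorm := ((hsq.sqrt hv.ne').const_mul (2 * π)).inv (by positivity)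
  have hq := ((hasDerivAt_id' r).const_mul (2 * x * y)).const_sub (x ^ 2 + y ^ 2)
  have hexp := (hq.fun_neg.fun_div (hsq.const_mul 2) (by positivity)).exp
  simp only [bvnPDFDerivRho, bvnPDF_zero_zero]
  refine ((hnorm.fun_mul hexp).congr_of_eventuallyEq (.of_forall fun s => ?_)).congr_deriv ?_
  · simp only [Pi.inv_apply]; ring_nf
  · have hs : √(1 - r ^ 2) ^ 2 = 1 - r ^ 2 := sq_sqrt hv.le
    simp only [Pi.inv_apply]
    field_simp
    rw [hs]
    ring_nf

lemma continuousOn_bvnPDFDerivRho :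
    ContinuousOn (fun q : ℝ × ℝ × ℝ => bvnPDFDerivRho q.1 q.2.1 q.2.2)
      ({r | r ^ 2 < 1} ×ˢ univ) := by
  refine fun q hq => ContinuousAt.continuousWithinAt ?_
  have h : 0 < 1 - q.1 ^ 2 := sub_pos.2 hq.1
  unfold bvnPDFDerivRho bvnPDF
  fun_prop (disch := simp [h.ne', (sqrt_pos.2 h).ne'])

lemma integral_bvnPDF (hr : r ^ 2 < 1) : ∫ p : ℝ × ℝ, bvnPDF 0 0 r p.1 p.2 = 1 := by
  have hi := integrable_bvnPDF hr
  rw [Measure.volume_eq_prod] at hi ⊢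
  simp_rw [integral_prod _ hi, integral_bvnPDF_eq_stdPDF hr, stdPDF_eq_gaussianPDFReal]
  exact integral_gaussianPDFReal_eq_one 0 one_ne_zero

lemma setIntegral_bvnPDF_prod_univ (hr : r ^ 2 < 1) (s : Set ℝ) :
    ∫ p in s ×ˢ univ, bvnPDF 0 0 r p.1 p.2 = ∫ x in s, stdPDF x := by
  have hi := (integrable_bvnPDF hr).integrableOn (s := s ×ˢ univ)
  rw [Measure.volume_eq_prod] at hi ⊢
  simp_rw [setIntegral_prod _ hi, Measure.restrict_univ, integral_bvnPDF_eq_stdPDF hr]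

lemma setIntegral_bvnPDF_univ_prod (hr : r ^ 2 < 1) (s : Set ℝ) :
    ∫ p in univ ×ˢ s, bvnPDF 0 0 r p.1 p.2 = ∫ x in s, stdPDF x := by
  have h := setIntegral_prod_swap s univ (fun p : ℝ × ℝ => bvnPDF 0 0 r p.1 p.2)
    (μ := volume) (ν := volume)
  simp only [Prod.fst_swap, Prod.snd_swap, ← bvnPDF_comm] at h
  rw [Measure.volume_eq_prod, h, ← Measure.volume_eq_prod, setIntegral_bvnPDF_prod_univ hr]

lemma quadProb_eq (hr : r ^ 2 < 1) (z : ℝ) :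
    quadProb 0 0 z r = 1 - 2 * (∫ x in Icc (-|z|) |z|, stdPDF x)
      + ∫ p in Icc (-|z|) |z| ×ˢ Icc (-|z|) |z|, bvnPDF 0 0 r p.1 p.2 := by
  have hset : {p : ℝ × ℝ | |z| < |p.1| ∧ |z| < |p.2|} =
      (Icc (-|z|) |z| ×ˢ univ)ᶜ ∩ (univ ×ˢ Icc (-|z|) |z|)ᶜ := by
    ext p
    simp only [mem_ofPred_eq, mem_inter_iff, mem_compl_iff, mem_prod, mem_univ, and_true,
      true_and, mem_Icc, ← abs_le, not_le]
  rw [quadProb, hset, setIntegral_compl_inter_compl (integrable_bvnPDF hr)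
    (measurableSet_Icc.prod .univ) (MeasurableSet.univ.prod measurableSet_Icc),
    integral_bvnPDF hr, setIntegral_bvnPDF_prod_univ hr, setIntegral_bvnPDF_univ_prod hr,
    prod_inter_prod, inter_univ, univ_inter]
  ring

lemma hasDerivAt_setIntegral_bvnPDF {K : Set (ℝ × ℝ)} (hK : IsCompact K) (hr : r ^ 2 < 1) :
    HasDerivAt (fun s => ∫ p in K, bvnPDF 0 0 s p.1 p.2)
      (∫ p in K, bvnPDFDerivRho r p.1 p.2) r := by
  have hr' : |r| < 1 := (sq_lt_one_iff_abs_lt_one r).1 hr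
  have hIcc : ∀ s ∈ Icc (-((1 + |r|) / 2)) ((1 + |r|) / 2), s ^ 2 < 1 := fun s hs =>
    (sq_lt_one_iff_abs_lt_one s).2 ((abs_le.2 hs).trans_lt (by linarith))
  refine hasDerivAt_setIntegral_of_continuousOn hK isCompact_Icc
    (Icc_mem_nhds (by linarith [neg_abs_le r]) (by linarith [le_abs_self r]))
    (fun s _ => (continuous_bvnPDF s).continuousOn)
    (continuousOn_bvnPDFDerivRho.mono (prod_mono (fun s hs => hIcc s hs) (subset_univ K)))
    (fun s hs p _ => hasDerivAt_bvnPDF_rho (hIcc s hs) p.1 p.2)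

lemma setIntegral_Icc_prod_Icc_bvnPDFDerivRho (hr : r ^ 2 < 1) {c : ℝ} (hc : 0 ≤ c) :
    ∫ p in Icc (-c) c ×ˢ Icc (-c) c, bvnPDFDerivRho r p.1 p.2 =
      2 * (bvnPDF 0 0 r c c - bvnPDF 0 0 r c (-c)) := by
  rw [integral_Icc_prod_Icc_eq_of_hasDerivAt (by linarith) (by linarith)
    (hasDerivAt_bvnPDF_x r) (hasDerivAt_bvnPDFDerivX_y hr)
    (fun y => by unfold bvnPDFDerivX bvnPDF; fun_prop) (by unfold bvnPDFDerivRho bvnPDF; fun_prop),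
    ← bvnPDF_neg_neg r (-c) c, neg_neg, bvnPDF_neg_neg]
  ring

lemma two_mul_bvnPDF_sub (hr : r ^ 2 < 1) (c : ℝ) :
    2 * (bvnPDF 0 0 r c c - bvnPDF 0 0 r c (-c)) =
      (π * √(1 - r ^ 2))⁻¹ * (exp (-c ^ 2 / (1 + r)) - exp (-c ^ 2 / (1 - r))) := by
  have hr' := abs_lt.1 ((sq_lt_one_iff_abs_lt_one r).1 hr)
  have hdiag : -(c ^ 2 - 2 * r * c * c + c ^ 2) / (2 * (1 - r ^ 2)) = -c ^ 2 / (1 + r) := by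
    field_simp [show 1 + r ≠ 0 by linarith, show 1 - r ^ 2 ≠ 0 by linarith]; ring
  have hanti : -(c ^ 2 - 2 * r * c * -c + (-c) ^ 2) / (2 * (1 - r ^ 2)) = -c ^ 2 / (1 - r) := by
    field_simp [show 1 - r ≠ 0 by linarith, show 1 - r ^ 2 ≠ 0 by linarith]; ring
  rw [bvnPDF_zero_zero, bvnPDF_zero_zero, hdiag, hanti, mul_inv, mul_inv, mul_inv]
  ring

end Bivariate

theorem statement17_general (t z ρ : ℝ) (ht1 : t ≠ 1)
    (hz : stdCDF z = t / 2) (hρ : ρ ∈ Set.Ioo (0 : ℝ) 1) :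
    HasDerivAt (fun r => quadProb 0 0 z r)
      ((Real.pi * Real.sqrt (1 - ρ ^ 2))⁻¹ *
        (Real.exp (-z ^ 2 / (1 + ρ)) - Real.exp (-z ^ 2 / (1 - ρ)))) ρ ∧
    0 < (Real.pi * Real.sqrt (1 - ρ ^ 2))⁻¹ *
        (Real.exp (-z ^ 2 / (1 + ρ)) - Real.exp (-z ^ 2 / (1 - ρ))) := by
  obtain ⟨hρ0, hρ1⟩ := hρ
  have hρ2 : ρ ^ 2 < 1 := by nlinarith
  have hz0 : z ≠ 0 := by
    rintro rfl
    rw [stdCDF_zero] at hz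
    exact ht1 (by linarith)
  refine ⟨?_, ?_⟩
  · have hQ : (fun r => quadProb 0 0 z r) =ᶠ[𝓝 ρ] fun r => 1 - 2 * (∫ x in Icc (-|z|) |z|, stdPDF x)
        + ∫ p in Icc (-|z|) |z| ×ˢ Icc (-|z|) |z|, bvnPDF 0 0 r p.1 p.2 := by
      filter_upwards [Ioo_mem_nhds (by linarith : -1 < ρ) hρ1] with r hr
      exact quadProb_eq ((sq_lt_one_iff_abs_lt_one r).2 (abs_lt.2 hr)) z
    have hS := (hasDerivAt_setIntegral_bvnPDF (K := Icc (-|z|) |z| ×ˢ Icc (-|z|) |z|)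
      (isCompact_Icc.prod isCompact_Icc) hρ2).const_add
      (1 - 2 * (∫ x in Icc (-|z|) |z|, stdPDF x))
    rw [setIntegral_Icc_prod_Icc_bvnPDFDerivRho hρ2 (abs_nonneg z), two_mul_bvnPDF_sub hρ2,
      sq_abs] at hS
    exact hS.congr_of_eventuallyEq hQ
  · have hexp : exp (-z ^ 2 / (1 - ρ)) < exp (-z ^ 2 / (1 + ρ)) := by
      rw [exp_lt_exp, neg_div, neg_div, neg_lt_neg_iff]
      exact div_lt_div_of_pos_left (by positivity) (by linarith) (by linarith)
    have hs : 0 < √(1 - ρ ^ 2) := sqrt_pos.2 (by linarith)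
    exact mul_pos (by positivity) (by linarith)

theorem statement17 (t z ρ : ℝ) (ht : t ∈ Set.Ioo (0 : ℝ) 1) (ht1 : t ≠ 1)
    (hz : stdCDF z = t / 2) (hρ : ρ ∈ Set.Ioo (0 : ℝ) 1) :
    HasDerivAt (fun r => quadProb 0 0 z r)
      ((Real.pi * Real.sqrt (1 - ρ ^ 2))⁻¹ *
        (Real.exp (-z ^ 2 / (1 + ρ)) - Real.exp (-z ^ 2 / (1 - ρ)))) ρ ∧
    0 < (Real.pi * Real.sqrt (1 - ρ ^ 2))⁻¹ *
        (Real.exp (-z ^ 2 / (1 + ρ)) - Real.exp (-z ^ 2 / (1 - ρ))) :=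
  statement17_general t z ρ ht1 hz hρ
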